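/- Let r > 0, L > 0, and let v be Lipschitz continuous with constant L on K := B_r ∩ {x ∈ ℝⁿ : x·eₙ ≤ 0}. Let p ∈ D⁺_K v(0). Then there exists t₀ ∈ [0, L + |p|] such that |p + t₀ eₙ| ≤ L and p + t₀ eₙ belongs to the closure of D⁺_K v(0). -/
import Mathlib


open Set Metric Filter MeasureTheory
open scoped Topology NNReal InnerProductSpace

noncomputable section

abbrev En (n : ℕ) := EuclideanSpace ℝ (Fin n)

/-- The last coordinate unit vector `eₙ = (0,…,0,1)` in `ℝ^{n+1}`. -/
def eLast (n : ℕ) : En (n + 1) := EuclideanSpace.single (Fin.last n) (1 : ℝ)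

variable {n : ℕ}

/-- The superdifferential `D⁺_V φ(x)` of `φ` at `x` relative to the set `V`. -/
def supDiff (V : Set (En n)) (φ : En n → ℝ) (x : En n) : Set (En n) :=
  {p | ∀ ε > 0, ∃ δ > 0, ∀ y ∈ V, ‖y - x‖ < δ →
      φ y ≤ φ x + ⟪p, y - x⟫_ℝ + ε * ‖y - x‖}

lemma norm_eLast : ‖eLast n‖ = 1 := by
  simp [eLast]

lemma isClosed_supDiff (V : Set (En n)) (φ : En n → ℝ) (x : En n) :
    IsClosed (supDiff V φ x) := by
  rw [← closure_eq_iff_isClosed]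
  refine Subset.antisymm ?_ subset_closure
  intro p hp ε hε
  obtain ⟨q, hq, hpq⟩ := Metric.mem_closure_iff.mp hp (ε / 2) (by positivity)
  obtain ⟨δ, hδ, H⟩ := hq (ε / 2) (by positivity)
  refine ⟨δ, hδ, fun y hy hyd => ?_⟩
  have h1 := H y hy hyd
  have h2 : |⟪q - p, y - x⟫_ℝ| ≤ ‖q - p‖ * ‖y - x‖ := abs_real_inner_le_norm _ _
  have h3 : ‖q - p‖ ≤ ε / 2 := by
    rw [← dist_eq_norm, dist_comm]
    exact hpq.le
  have h4 : ⟪q - p, y - x⟫_ℝ = ⟪q, y - x⟫_ℝ - ⟪p, y - x⟫_ℝ := inner_sub_left _ _ _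
  have h5 : ‖q - p‖ * ‖y - x‖ ≤ (ε / 2) * ‖y - x‖ :=
    mul_le_mul_of_nonneg_right h3 (norm_nonneg _)
  have h6 : ⟪q, y - x⟫_ℝ - ⟪p, y - x⟫_ℝ ≤ (ε / 2) * ‖y - x‖ := by
    calc ⟪q, y - x⟫_ℝ - ⟪p, y - x⟫_ℝ = ⟪q - p, y - x⟫_ℝ := h4.symm
    _ ≤ |⟪q - p, y - x⟫_ℝ| := le_abs_self _
    _ ≤ ‖q - p‖ * ‖y - x‖ := h2
    _ ≤ (ε / 2) * ‖y - x‖ := h5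
  linarith

section aux

variable {r : ℝ} {L : ℝ≥0} {v : En (n + 1) → ℝ}

/-- The vertical component of any supergradient is at most `L`. -/
lemma inner_eLast_le
    (hr : 0 < r)
    (hv : LipschitzOnWith L v (ball 0 r ∩ {x : En (n + 1) | ⟪x, eLast n⟫_ℝ ≤ 0}))
    {q : En (n + 1)}
    (hq : q ∈ supDiff (ball 0 r ∩ {x : En (n + 1) | ⟪x, eLast n⟫_ℝ ≤ 0}) v 0) :
    ⟪q, eLast n⟫_ℝ ≤ L := by
  have h0K : (0 : En (n + 1)) ∈ ball (0 : En (n+1)) r ∩ {x : En (n + 1) | ⟪x, eLast n⟫_ℝ ≤ 0} := by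
    constructor
    · simpa using hr
    · simp [Set.mem_setOf_eq]
  refine le_of_forall_pos_le_add fun ε hε => ?_
  obtain ⟨δ, hδ, H⟩ := hq ε hε
  set s : ℝ := min δ r / 2 with hs
  have hs0 : 0 < s := by positivity
  set y : En (n + 1) := (-s) • eLast n with hy
  have hny : ‖y‖ = s := by
    rw [hy, norm_smul, norm_eLast]
    simp [abs_of_pos hs0]
  have hyK : y ∈ ball (0 : En (n+1)) r ∩ {x : En (n + 1) | ⟪x, eLast n⟫_ℝ ≤ 0} := by
    constructor
    · rw [mem_ball, dist_zero_right, hny]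
      calc s = min δ r / 2 := hs
      _ < min δ r := by have h := lt_min hδ hr; linarith
      _ ≤ r := min_le_right _ _
    · have : ⟪y, eLast n⟫_ℝ = -s * (‖eLast n‖ * ‖eLast n‖) := by
        rw [hy, real_inner_smul_left, real_inner_self_eq_norm_mul_norm]
      rw [Set.mem_setOf_eq, this, norm_eLast]
      nlinarith
  have hyd : ‖y - 0‖ < δ := by
    rw [sub_zero, hny]
    calc s < min δ r := by have h := lt_min hδ hr; linarith
    _ ≤ δ := min_le_left _ _
  have h1 := H y hyK hyd
  have h2 : ⟪q, y - 0⟫_ℝ = -s * ⟪q, eLast n⟫_ℝ := by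
    rw [sub_zero, hy, real_inner_smul_right]
  have h3 : dist (v y) (v 0) ≤ L * dist y 0 := hv.dist_le_mul y hyK 0 h0K
  have h4 : v 0 - L * s ≤ v y := by
    rw [dist_zero_right, hny] at h3
    have := abs_le.mp (by rwa [Real.dist_eq] at h3)
    linarith [this.1]
  rw [h2, sub_zero, hny] at h1
  nlinarith

/-- Key push lemma: a supergradient of norm ≥ L + 2s can be pushed by `s • eLast n`. -/
lemma push_lemma
    (hr : 0 < r)
    (hv : LipschitzOnWith L v (ball 0 r ∩ {x : En (n + 1) | ⟪x, eLast n⟫_ℝ ≤ 0}))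
    {q : En (n + 1)}
    (hq : q ∈ supDiff (ball 0 r ∩ {x : En (n + 1) | ⟪x, eLast n⟫_ℝ ≤ 0}) v 0)
    {s : ℝ} (hs : 0 ≤ s) (hq0 : 0 < ‖q‖) (hLq : (L : ℝ) + 2 * s ≤ ‖q‖) :
    q + s • eLast n ∈ supDiff (ball 0 r ∩ {x : En (n + 1) | ⟪x, eLast n⟫_ℝ ≤ 0}) v 0 := by
  intro ε hε
  obtain ⟨δ', hδ', H⟩ := hq (ε / 4) (by positivity)
  refine ⟨min (δ' / 2) (r / 2), by positivity, ?_⟩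
  intro y hy hyd
  rw [sub_zero] at hyd ⊢
  have hyδ : ‖y‖ < δ' / 2 := lt_of_lt_of_le hyd (min_le_left _ _)
  have hyr : ‖y‖ < r / 2 := lt_of_lt_of_le hyd (min_le_right _ _)
  set ρ : ℝ := -⟪y, eLast n⟫_ℝ with hρdef
  have hρ0 : 0 ≤ ρ := by
    have := hy.2
    simp only [Set.mem_setOf_eq] at this
    linarith
  have hρy : ρ ≤ ‖y‖ := by
    have h := abs_real_inner_le_norm y (eLast n)
    rw [norm_eLast, mul_one] at h
    calc ρ ≤ |⟪y, eLast n⟫_ℝ| := by rw [hρdef]; exact neg_le_abs _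
    _ ≤ ‖y‖ := h
  set z : En (n + 1) := y - (ρ * ‖q‖⁻¹) • q with hz
  have hyz : y - z = (ρ * ‖q‖⁻¹) • q := by rw [hz]; abel
  have hnyz : ‖y - z‖ = ρ := by
    rw [hyz, norm_smul, Real.norm_eq_abs, abs_of_nonneg (by positivity)]
    field_simp
  have hzn : ‖z‖ ≤ ‖y‖ + ρ := by
    have hzy : z = y - (y - z) := by abel
    calc ‖z‖ = ‖y - (y - z)‖ := by rw [← hzy]
    _ ≤ ‖y‖ + ‖y - z‖ := norm_sub_le _ _
    _ = ‖y‖ + ρ := by rw [hnyz]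
  have hz2 : ‖z‖ ≤ 2 * ‖y‖ := by linarith
  have hqe : |⟪q, eLast n⟫_ℝ| ≤ ‖q‖ := by
    have h := abs_real_inner_le_norm q (eLast n)
    rwa [norm_eLast, mul_one] at h
  have hzK : z ∈ ball (0 : En (n+1)) r ∩ {x : En (n + 1) | ⟪x, eLast n⟫_ℝ ≤ 0} := by
    constructor
    · rw [mem_ball, dist_zero_right]
      calc ‖z‖ ≤ 2 * ‖y‖ := hz2
      _ < 2 * (r / 2) := by linarith
      _ = r := by ring
    · have hye : ⟪y, eLast n⟫_ℝ = -ρ := by rw [hρdef]; ring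
      have hinner : ⟪z, eLast n⟫_ℝ = -ρ - (ρ * ‖q‖⁻¹) * ⟪q, eLast n⟫_ℝ := by
        rw [hz, inner_sub_left, real_inner_smul_left, hye]
      rw [Set.mem_setOf_eq, hinner]
      have h1 : -‖q‖ ≤ ⟪q, eLast n⟫_ℝ := neg_le_of_abs_le hqe
      have h2 : (ρ * ‖q‖⁻¹) * (-‖q‖) ≤ (ρ * ‖q‖⁻¹) * ⟪q, eLast n⟫_ℝ :=
        mul_le_mul_of_nonneg_left h1 (by positivity)
      have h3 : (ρ * ‖q‖⁻¹) * (-‖q‖) = -ρ := by field_simp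
      linarith
  have hzδ : ‖z - 0‖ < δ' := by
    rw [sub_zero]
    calc ‖z‖ ≤ 2 * ‖y‖ := hz2
    _ < 2 * (δ' / 2) := by linarith
    _ = δ' := by ring
  have hHz := H z hzK hzδ
  rw [sub_zero] at hHz
  have hinnerqz : ⟪q, z⟫_ℝ = ⟪q, y⟫_ℝ - ρ * ‖q‖ := by
    rw [hz, inner_sub_right, real_inner_smul_right, real_inner_self_eq_norm_mul_norm]
    field_simp
  have hlip : v y ≤ v z + L * ρ := by
    have h := hv.dist_le_mul y hy z hzK
    rw [Real.dist_eq, dist_eq_norm, hnyz] at h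
    have h2 := abs_le.mp h
    linarith [h2.1]
  have hye : ⟪y, eLast n⟫_ℝ = -ρ := by rw [hρdef]; ring
  have hcomm : ⟪eLast n, y⟫_ℝ = ⟪y, eLast n⟫_ℝ := real_inner_comm _ _
  have hgoalinner : ⟪q + s • eLast n, y⟫_ℝ = ⟪q, y⟫_ℝ - s * ρ := by
    rw [inner_add_left, real_inner_smul_left, hcomm, hye]
    ring
  rw [hgoalinner]
  have key : ρ * ((L : ℝ) + 2 * s) ≤ ρ * ‖q‖ := mul_le_mul_of_nonneg_left hLq hρ0
  have hz4 : (ε / 4) * ‖z‖ ≤ (ε / 4) * (2 * ‖y‖) :=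
    mul_le_mul_of_nonneg_left hz2 (by positivity)
  nlinarith [mul_nonneg hs hρ0, mul_nonneg (le_of_lt hε) (norm_nonneg y)]

end aux

/-- from the proof of Lemma 2.3: any supergradient `p` of a Lipschitz
function on the half ball at the boundary point `0` can be pushed in the direction `eₙ`
into the closure of the superdifferential so that its norm does not exceed the Lipschitz
constant. -/
theorem exists_shift_in_normal_direction
    {n : ℕ} (r : ℝ) (hr : 0 < r) (L : ℝ≥0) (hL : 0 < (L : ℝ))
    (v : En (n + 1) → ℝ)
    (hv : LipschitzOnWith L v (ball 0 r ∩ {x : En (n + 1) | ⟪x, eLast n⟫_ℝ ≤ 0}))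
    (p : En (n + 1))
    (hp : p ∈ supDiff (ball 0 r ∩ {x : En (n + 1) | ⟪x, eLast n⟫_ℝ ≤ 0}) v 0) :
    ∃ t₀ ∈ Icc (0:ℝ) ((L : ℝ) + ‖p‖),
      ‖p + t₀ • eLast n‖ ≤ L ∧
      p + t₀ • eLast n ∈
        closure (supDiff (ball 0 r ∩ {x : En (n + 1) | ⟪x, eLast n⟫_ℝ ≤ 0}) v 0) := by
  set K := ball (0 : En (n+1)) r ∩ {x : En (n + 1) | ⟪x, eLast n⟫_ℝ ≤ 0} with hK
  set D := supDiff K v 0 with hD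
  set T : Set ℝ := {t | 0 ≤ t ∧ p + t • eLast n ∈ D} with hT
  have h0T : (0 : ℝ) ∈ T := by
    refine ⟨le_refl _, ?_⟩
    simpa using hp
  have hbdd : ∀ t ∈ T, t ≤ (L : ℝ) + ‖p‖ := by
    intro t ht
    have h1 : ⟪p + t • eLast n, eLast n⟫_ℝ ≤ L := inner_eLast_le hr hv ht.2
    have h2 : ⟪p + t • eLast n, eLast n⟫_ℝ = ⟪p, eLast n⟫_ℝ + t := by
      rw [inner_add_left, real_inner_smul_left, real_inner_self_eq_norm_mul_norm, norm_eLast]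
      ring
    have h3 : -‖p‖ ≤ ⟪p, eLast n⟫_ℝ := by
      have h := abs_real_inner_le_norm p (eLast n)
      rw [norm_eLast, mul_one] at h
      exact neg_le_of_abs_le h
    linarith
  have hBdd : BddAbove T := ⟨(L : ℝ) + ‖p‖, fun t ht => hbdd t ht⟩
  have hTclosed : IsClosed T := by
    have h1 : IsClosed {t : ℝ | 0 ≤ t} := isClosed_Ici
    have h2 : IsClosed {t : ℝ | p + t • eLast n ∈ D} := by
      have hc : Continuous fun t : ℝ => p + t • eLast n := by fun_prop
      exact IsClosed.preimage hc (isClosed_supDiff K v 0)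
    exact h1.inter h2
  set t₀ : ℝ := sSup T with ht₀
  have ht₀T : t₀ ∈ T := hTclosed.csSup_mem ⟨0, h0T⟩ hBdd
  have ht₀0 : 0 ≤ t₀ := ht₀T.1
  have ht₀le : t₀ ≤ (L : ℝ) + ‖p‖ := hbdd t₀ ht₀T
  set q := p + t₀ • eLast n with hq
  have hqD : q ∈ D := ht₀T.2
  have hnormq : ‖q‖ ≤ L := by
    by_contra hcon
    push_neg at hcon
    set s : ℝ := (‖q‖ - L) / 2 with hs
    have hs0 : 0 < s := by simp only [hs]; linarith
    have hpush : q + s • eLast n ∈ D :=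
      push_lemma hr hv hqD (le_of_lt hs0) (by linarith) (by rw [hs]; ring_nf; linarith)
    have hmem : t₀ + s ∈ T := by
      refine ⟨by linarith, ?_⟩
      have : p + (t₀ + s) • eLast n = q + s • eLast n := by
        rw [hq, add_smul]; abel
      rwa [this]
    have := le_csSup hBdd hmem
    linarith
  exact ⟨t₀, ⟨ht₀0, ht₀le⟩, hnormq, subset_closure hqD⟩
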